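/- Let H be a model graph and G a simple undirected graph admitting an H-partition (V_A, V_B, V_C, V_D). Let v be a vertex of G and let L ⊆ {A,B,C,D} be a set of labels, each of which is 'possible' for v relative to some fixed partial labeling extending a base (i.e., for every P ∈ L, every full edge (P,Q) of H, and every already-labeled vertex y with label Q, v is adjacent to y; and for every dotted edge (P,Q) of H and every already-labeled vertex y with label Q, v is nonadjacent to y), where the partial labeling assigns each label in {A,B,C,D} to at least one vertex. If |L| ≥ 2 and L is exactly the set of all possible labels for v, then L is not conflicting, i.e., N_full(L) ∩ N_dotted(L) = ∅. -/

import Mathlib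

inductive Label : Type
  | A | B | C | D
deriving DecidableEq

instance instFintypeLabel : Fintype Label :=
  ⟨{.A, .B, .C, .D}, fun x => by cases x <;> simp⟩

/-- A model graph: an undirected graph on the four labels A,B,C,D, each edge
marked full or dotted (never both), symmetric and irreflexive. -/
structure ModelGraph : Type where
  full : Label → Label → Bool
  dotted : Label → Label → Bool
  full_symm : ∀ p q, full p q = full q p
  dotted_symm : ∀ p q, dotted p q = dotted q p
  full_irrefl : ∀ p, full p p = false
  dotted_irrefl : ∀ p, dotted p p = false
  not_both : ∀ p q, ¬ (full p q = true ∧ dotted p q = true)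

/-- `ℓ` is an `H`-partition of `G`: all four classes nonempty, full edges of `H`
force complete adjacency, dotted edges force complete nonadjacency. -/
def IsHPartition {V : Type} (G : SimpleGraph V) (H : ModelGraph) (ℓ : V → Label) : Prop :=
  (∀ p : Label, ∃ v, ℓ v = p) ∧
  (∀ u v, H.full (ℓ u) (ℓ v) = true → G.Adj u v) ∧
  (∀ u v, H.dotted (ℓ u) (ℓ v) = true → ¬ G.Adj u v)

/-- Label `p` is possible for vertex `v` relative to the partial labeling `pl`. -/
def Possible {V : Type} (G : SimpleGraph V) (H : ModelGraph)
    (pl : V → Option Label) (v : V) (p : Label) : Prop :=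
  (∀ q y, H.full p q = true → pl y = some q → G.Adj v y) ∧
  (∀ q y, H.dotted p q = true → pl y = some q → ¬ G.Adj v y)

/-- Full-edge neighborhood of a set of labels. -/
def NFull (H : ModelGraph) (L : Finset Label) : Finset Label :=
  Finset.univ.filter (fun q => ∃ p ∈ L, H.full p q = true)

/-- Dotted-edge neighborhood of a set of labels. -/
def NDotted (H : ModelGraph) (L : Finset Label) : Finset Label :=
  Finset.univ.filter (fun q => ∃ p ∈ L, H.dotted p q = true)

/-- Class sizes `a,b,c,d` as a function of the label. -/
def cnt (a b c d : ℕ) : Label → ℕ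
  | .A => a | .B => b | .C => c | .D => d

/-! If `q ∈ N_full(L) ∩ N_dotted(L)` via labels `p₁, p₂ ∈ L`, pick a vertex `y` labelled `q`:
`p₁` being possible forces `v ~ y`, while `p₂` being possible forbids it. -/

theorem Possible.not_full_and_dotted {V : Type} {G : SimpleGraph V} {H : ModelGraph}
    {pl : V → Option Label} {v : V} {p₁ p₂ q : Label}
    (h₁ : Possible G H pl v p₁) (h₂ : Possible G H pl v p₂) (hq : ∃ y, pl y = some q) :
    ¬ (H.full p₁ q = true ∧ H.dotted p₂ q = true) := by
  rintro ⟨hfull, hdotted⟩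
  obtain ⟨y, hy⟩ := hq
  exact h₂.2 q y hdotted hy (h₁.1 q y hfull hy)

theorem nfull_inter_ndotted_eq_empty_of_forall_possible {V : Type} {G : SimpleGraph V}
    {H : ModelGraph} {pl : V → Option Label} (hbase : ∀ p : Label, ∃ y, pl y = some p)
    {v : V} {L : Finset Label} (hL : ∀ p ∈ L, Possible G H pl v p) :
    NFull H L ∩ NDotted H L = ∅ := by
  ext q
  simp only [NFull, NDotted, Finset.mem_inter, Finset.mem_filter, Finset.mem_univ, true_and,
    Finset.notMem_empty, iff_false]
  rintro ⟨⟨p₁, hp₁, hfull⟩, ⟨p₂, hp₂, hdotted⟩⟩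
  exact (hL p₁ hp₁).not_full_and_dotted (hL p₂ hp₂) (hbase q) ⟨hfull, hdotted⟩

theorem stmt_0_general {V : Type} (G : SimpleGraph V) (H : ModelGraph)
    (pl : V → Option Label) (hbase : ∀ p : Label, ∃ y, pl y = some p)
    (v : V) (L : Finset Label)
    (hL : ∀ p : Label, p ∈ L ↔ Possible G H pl v p) :
    NFull H L ∩ NDotted H L = ∅ :=
  nfull_inter_ndotted_eq_empty_of_forall_possible hbase fun p hp => (hL p).mp hp

/-- if every label of L is possible for v (and L is exactly the set
of possible labels, of size ≥ 2) relative to a partial labeling using every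
label, and G admits an H-partition, then L is not conflicting. -/
theorem stmt_0 {V : Type} (G : SimpleGraph V) (H : ModelGraph)
    (ℓ : V → Label) (hpart : IsHPartition G H ℓ)
    (pl : V → Option Label) (hbase : ∀ p : Label, ∃ y, pl y = some p)
    (v : V) (L : Finset Label)
    (hL : ∀ p : Label, p ∈ L ↔ Possible G H pl v p)
    (hcard : 2 ≤ L.card) :
    NFull H L ∩ NDotted H L = ∅ :=
  stmt_0_general G H pl hbase v L hL
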